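/- arXiv:1105.0015 — 2 statements merged into one kernel-verified Lean document; each statement's English description precedes it below -/
import Mathlib

section
/- Let {γ_k, k ≥ 1} be a stationary sequence of real zero-mean square-integrable random variables together with coupled versions γ_ℓ^{(j)} such that γ_ℓ^{(ℓ-k)} is independent of γ_k for ℓ > k, E[γ_ℓ^{(j)}] = 0, and c := Σ_{j=1}^∞ (E(γ_1 - γ_1^{(j)})²)^{1/2} < ∞. Then sup_{t ∈ R} E|N^{-1/2} Σ_{k=1}^N γ_k e^{i k t}|² ≤ E γ_1² + 2 c (E γ_1²)^{1/2} for every N ≥ 1. -/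
/-!
Expanding the square, `E|∑ γ_k e^{ikt}|² = ∑_{k,l} E[γ_k γ_l] cos((k - l)t)`, and the diagonal
contributes `N · Eγ₁²`. For `k < l` the coupled variable `γ_l^{(l-k)}` is independent of the
centred `γ_k`, so `E[γ_k γ_l] = E[γ_k (γ_l - γ_l^{(l-k)})]`; Cauchy–Schwarz and stationarity bound
this by `(Eγ₁²)^{1/2} (E(γ₁ - γ₁^{(l-k)})²)^{1/2}`. In a row `k` each lag `|k - l| ≥ 1` occurs at
most twice, which gives the term `2c (Eγ₁²)^{1/2}`.
-/
open MeasureTheory ProbabilityTheory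

lemma re_mul_exp_mul_conj (a b x y : ℝ) :
    ((a : ℂ) * Complex.exp (Complex.I * x)
        * (starRingEnd ℂ) ((b : ℂ) * Complex.exp (Complex.I * y))).re
      = a * b * Real.cos (x - y) := by
  rw [mul_comm Complex.I, mul_comm Complex.I, Complex.exp_mul_I, Complex.exp_mul_I, Real.cos_sub]
  simp [Complex.cos_ofReal_re, Complex.sin_ofReal_re]
  ring

lemma norm_sq_sum_mul_exp (S : Finset ℕ) (a : ℕ → ℝ) (t : ℝ) :
    ‖∑ k ∈ S, (a k : ℂ) * Complex.exp (Complex.I * k * t)‖ ^ 2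
      = ∑ k ∈ S, ∑ l ∈ S, a k * a l * Real.cos ((k - l : ℝ) * t) := by
  rw [← Complex.normSq_eq_norm_sq, ← Complex.ofReal_re (Complex.normSq _), ← Complex.mul_conj,
    map_sum, Finset.sum_mul_sum, Complex.re_sum]
  refine Finset.sum_congr rfl fun k _ => ?_
  rw [Complex.re_sum]
  refine Finset.sum_congr rfl fun l _ => ?_
  simpa only [Complex.ofReal_mul, Complex.ofReal_natCast, ← sub_mul, mul_assoc]
    using re_mul_exp_mul_conj (a k) (a l) (k * t) (l * t)

lemma Finset.sum_comp_le_tsum_of_injOn {ι α : Type*} {A : α → ℝ} (hA : ∀ j, 0 ≤ A j)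
    (hAs : Summable A) {s : Finset ι} {g : ι → α} (hg : Set.InjOn g s) :
    ∑ i ∈ s, A (g i) ≤ ∑' j, A j := by
  classical
  rw [← Finset.sum_image hg]
  exact hAs.sum_le_tsum _ fun j _ => hA j

lemma sum_erase_dist_le_two_mul_tsum {A : ℕ → ℝ} (hA : ∀ j, 0 ≤ A j) (hAs : Summable A)
    (T : Finset ℕ) (k : ℕ) :
    ∑ l ∈ T.erase k, A (Nat.dist k l - 1) ≤ 2 * ∑' j, A j := by
  rw [← Finset.sum_filter_add_sum_filter_not (T.erase k) (· < k), two_mul]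
  have hdist : ∀ l, Nat.dist k l = k - l + (l - k) := fun _ => rfl
  -- on either side of `k`, the lag `Nat.dist k l` determines `l`
  gcongr <;> refine Finset.sum_comp_le_tsum_of_injOn hA hAs fun x hx y hy hxy => ?_ <;>
    simp only [Finset.coe_filter, Finset.mem_erase, Set.mem_ofPred_eq, hdist] at hx hy hxy <;>
    omega

/-- `A j` bounds the off-diagonal entries at distance `j + 1`. -/
lemma sum_sum_le_card_mul_of_le_dist {M : ℕ → ℕ → ℝ} {A : ℕ → ℝ} {D B : ℝ}
    (hA : ∀ j, 0 ≤ A j) (hAs : Summable A) (hB : 0 ≤ B) (hdiag : ∀ k, M k k ≤ D)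
    (hoff : ∀ k l, k ≠ l → M k l ≤ B * A (Nat.dist k l - 1)) (S : Finset ℕ) :
    ∑ k ∈ S, ∑ l ∈ S, M k l ≤ S.card * (D + 2 * (∑' j, A j) * B) := by
  rw [← nsmul_eq_mul, ← Finset.sum_const]
  refine Finset.sum_le_sum fun k hk => ?_
  rw [← Finset.add_sum_erase S _ hk]
  gcongr
  · exact hdiag k
  calc ∑ l ∈ S.erase k, M k l ≤ ∑ l ∈ S.erase k, B * A (Nat.dist k l - 1) :=
        Finset.sum_le_sum fun l hl => hoff k l (Finset.ne_of_mem_erase hl).symm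
    _ = B * ∑ l ∈ S.erase k, A (Nat.dist k l - 1) := (Finset.mul_sum _ _ _).symm
    _ ≤ B * (2 * ∑' j, A j) := by gcongr; exact sum_erase_dist_le_two_mul_tsum hA hAs S k
    _ = 2 * (∑' j, A j) * B := mul_comm _ _

section Integrals

variable {Ω : Type*} [MeasurableSpace Ω] {μ : Measure Ω}

lemma abs_integral_mul_le_sqrt_mul_sqrt {f g : Ω → ℝ} (hf : MemLp f 2 μ) (hg : MemLp g 2 μ) :
    |∫ ω, f ω * g ω ∂μ| ≤ √(∫ ω, f ω ^ 2 ∂μ) * √(∫ ω, g ω ^ 2 ∂μ) := by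
  have holder := integral_mul_norm_le_Lp_mul_Lq Real.HolderConjugate.two_two
    (by simpa using hf) (by simpa using hg)
  simp only [Real.norm_eq_abs, Real.rpow_two, sq_abs, ← Real.sqrt_eq_rpow] at holder
  calc |∫ ω, f ω * g ω ∂μ| ≤ ∫ ω, |f ω * g ω| ∂μ := abs_integral_le_integral_abs
    _ = ∫ ω, |f ω| * |g ω| ∂μ := by simp only [abs_mul]
    _ ≤ _ := holder

lemma abs_integral_mul_le_of_indepFun {f g g' : Ω → ℝ} (hf : MemLp f 2 μ) (hg : MemLp g 2 μ)
    (hg' : MemLp g' 2 μ) (hf0 : ∫ ω, f ω ∂μ = 0) (hind : IndepFun g' f μ) :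
    |∫ ω, f ω * g ω ∂μ| ≤ √(∫ ω, f ω ^ 2 ∂μ) * √(∫ ω, (g ω - g' ω) ^ 2 ∂μ) := by
  have hfg' : ∫ ω, f ω * g' ω ∂μ = 0 := by
    simp_rw [mul_comm (f _)]
    rw [hind.integral_fun_mul_eq_mul_integral hg'.aestronglyMeasurable hf.aestronglyMeasurable,
      hf0, mul_zero]
  have hsplit : ∫ ω, f ω * g ω ∂μ = ∫ ω, f ω * (g ω - g' ω) ∂μ := by
    simp_rw [mul_sub]
    have hint : ∀ h : Ω → ℝ, MemLp h 2 μ → Integrable (fun ω => f ω * h ω) μ :=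
      fun h hh => hf.integrable_mul hh
    rw [integral_sub (hint g hg) (hint g' hg'), hfg', sub_zero]
  rw [hsplit]
  exact abs_integral_mul_le_sqrt_mul_sqrt hf (hg.sub hg')

lemma integral_norm_sq_sum_mul_exp {γ : ℕ → Ω → ℝ} (hγ : ∀ k, MemLp (γ k) 2 μ) (S : Finset ℕ)
    (t : ℝ) :
    ∫ ω, ‖∑ k ∈ S, (γ k ω : ℂ) * Complex.exp (Complex.I * k * t)‖ ^ 2 ∂μ
      = ∑ k ∈ S, ∑ l ∈ S, (∫ ω, γ k ω * γ l ω ∂μ) * Real.cos ((k - l : ℝ) * t) := by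
  have hint : ∀ k l : ℕ, Integrable (fun ω => γ k ω * γ l ω * Real.cos ((k - l : ℝ) * t)) μ :=
    fun k l => ((hγ k).integrable_mul (hγ l)).mul_const _
  simp_rw [norm_sq_sum_mul_exp]
  rw [integral_finsetSum _ fun k _ => integrable_finsetSum _ fun l _ => hint k l]
  refine Finset.sum_congr rfl fun k _ => ?_
  rw [integral_finsetSum _ fun l _ => hint k l]
  exact Finset.sum_congr rfl fun l _ => integral_mul_const _ _

lemma abs_integral_mul_le_of_coupling {γ : ℕ → Ω → ℝ} {γ' : ℕ → ℕ → Ω → ℝ}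
    (hL2 : ∀ k, MemLp (γ k) 2 μ) (hL2' : ∀ m k, MemLp (γ' m k) 2 μ)
    (hmean : ∀ k, ∫ ω, γ k ω ∂μ = 0)
    (hindep : ∀ k l : ℕ, k < l → IndepFun (γ' (l - k) l) (γ k) μ)
    (hstat2 : ∀ k, ∫ ω, (γ k ω) ^ 2 ∂μ = ∫ ω, (γ 1 ω) ^ 2 ∂μ)
    (hstat2' : ∀ l j, ∫ ω, (γ l ω - γ' j l ω) ^ 2 ∂μ = ∫ ω, (γ 1 ω - γ' j 1 ω) ^ 2 ∂μ)
    {k l : ℕ} (hkl : k ≠ l) :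
    |∫ ω, γ k ω * γ l ω ∂μ|
      ≤ √(∫ ω, (γ 1 ω) ^ 2 ∂μ) * √(∫ ω, (γ 1 ω - γ' (Nat.dist k l) 1 ω) ^ 2 ∂μ) := by
  wlog hlt : k < l generalizing k l
  · simpa only [mul_comm (γ k _), Nat.dist_comm] using this hkl.symm (by omega)
  have hdist : Nat.dist k l = l - k := by simp [Nat.dist, Nat.sub_eq_zero_of_le hlt.le]
  rw [hdist, ← hstat2 k, ← hstat2' l]
  exact abs_integral_mul_le_of_indepFun (hL2 k) (hL2 l) (hL2' _ _) (hmean k) (hindep k l hlt)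

end Integrals

theorem stmt_10_general {Ω : Type*} [MeasureSpace Ω]
    (γ : ℕ → Ω → ℝ) (γ' : ℕ → ℕ → Ω → ℝ) (N : ℕ)
    (hL2 : ∀ k, MemLp (γ k) 2 ℙ) (hL2' : ∀ m k, MemLp (γ' m k) 2 ℙ)
    (hmean : ∀ k, ∫ ω, γ k ω = 0)
    (hindep : ∀ k l : ℕ, k < l → IndepFun (γ' (l - k) l) (γ k) ℙ)
    (hstat2 : ∀ k, ∫ ω, (γ k ω)^2 = ∫ ω, (γ 1 ω)^2)
    (hstat2' : ∀ l j, ∫ ω, (γ l ω - γ' j l ω)^2 = ∫ ω, (γ 1 ω - γ' j 1 ω)^2)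
    (c : ℝ) (hc : c = ∑' j : ℕ, Real.sqrt (∫ ω, (γ 1 ω - γ' (j + 1) 1 ω)^2))
    (hsum : Summable fun j : ℕ => Real.sqrt (∫ ω, (γ 1 ω - γ' (j + 1) 1 ω)^2)) :
    ∀ t : ℝ,
      ∫ ω, (1/(N:ℝ)) *
          ‖∑ k ∈ Finset.Icc 1 N, (γ k ω : ℂ) * Complex.exp (Complex.I * k * t)‖^2
        ≤ (∫ ω, (γ 1 ω)^2) + 2 * c * Real.sqrt (∫ ω, (γ 1 ω)^2) := by
  intro t
  have hdiag : ∀ k : ℕ, (∫ ω, γ k ω * γ k ω) * Real.cos ((k - k : ℝ) * t) ≤ ∫ ω, (γ 1 ω)^2 :=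
    fun k => by simp [← sq, hstat2 k]
  have hoff : ∀ k l : ℕ, k ≠ l → (∫ ω, γ k ω * γ l ω) * Real.cos ((k - l : ℝ) * t)
      ≤ √(∫ ω, (γ 1 ω)^2) * √(∫ ω, (γ 1 ω - γ' (Nat.dist k l - 1 + 1) 1 ω)^2) := by
    intro k l hkl
    rw [Nat.sub_add_cancel (Nat.dist_pos_of_ne hkl)]
    calc _ ≤ |(∫ ω, γ k ω * γ l ω) * Real.cos ((k - l : ℝ) * t)| := le_abs_self _
      _ = |∫ ω, γ k ω * γ l ω| * |Real.cos ((k - l : ℝ) * t)| := abs_mul _ _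
      _ ≤ |∫ ω, γ k ω * γ l ω| :=
          mul_le_of_le_one_right (abs_nonneg _) (Real.abs_cos_le_one _)
      _ ≤ _ := abs_integral_mul_le_of_coupling hL2 hL2' hmean hindep hstat2 hstat2' hkl
  have hdouble := sum_sum_le_card_mul_of_le_dist (fun _ => Real.sqrt_nonneg _) hsum
    (Real.sqrt_nonneg _) hdiag hoff (Finset.Icc 1 N)
  rw [← hc, Nat.card_Icc, Nat.add_sub_cancel] at hdouble
  have hc0 : 0 ≤ c := hc ▸ tsum_nonneg fun _ => Real.sqrt_nonneg _
  have hE0 : 0 ≤ ∫ ω, (γ 1 ω)^2 := integral_nonneg fun _ => sq_nonneg _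
  rw [integral_const_mul, integral_norm_sq_sum_mul_exp hL2, one_div_mul_eq_div]
  exact div_le_of_le_mul₀ N.cast_nonneg (by positivity) (by linarith)

/-- For a stationary zero-mean square-integrable sequence with coupled
approximations satisfying `c := Σ_j √(E(γ₁-γ₁^{(j)})²) < ∞`, the normalized trigonometric sums
satisfy `sup_t E|N^{-1/2} Σ_{k=1}^N γ_k e^{ikt}|² ≤ Eγ₁² + 2c√(Eγ₁²)`. -/
theorem stmt_10 {Ω : Type*} [MeasureSpace Ω] [IsProbabilityMeasure (ℙ : Measure Ω)]
    (γ : ℕ → Ω → ℝ) (γ' : ℕ → ℕ → Ω → ℝ) (N : ℕ) (hN : 1 ≤ N)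
    (hmeas : ∀ k, Measurable (γ k)) (hmeas' : ∀ m k, Measurable (γ' m k))
    (hL2 : ∀ k, MemLp (γ k) 2 ℙ) (hL2' : ∀ m k, MemLp (γ' m k) 2 ℙ)
    (hmean : ∀ k, ∫ ω, γ k ω = 0) (hmean' : ∀ m k, ∫ ω, γ' m k ω = 0)
    (hindep : ∀ k l : ℕ, k < l → IndepFun (γ' (l - k) l) (γ k) ℙ)
    (hstat2 : ∀ k, ∫ ω, (γ k ω)^2 = ∫ ω, (γ 1 ω)^2)
    (hstat2' : ∀ l j, ∫ ω, (γ l ω - γ' j l ω)^2 = ∫ ω, (γ 1 ω - γ' j 1 ω)^2)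
    (c : ℝ) (hc : c = ∑' j : ℕ, Real.sqrt (∫ ω, (γ 1 ω - γ' (j + 1) 1 ω)^2))
    (hsum : Summable fun j : ℕ => Real.sqrt (∫ ω, (γ 1 ω - γ' (j + 1) 1 ω)^2)) :
    ∀ t : ℝ,
      ∫ ω, (1/(N:ℝ)) *
          ‖∑ k ∈ Finset.Icc 1 N, (γ k ω : ℂ) * Complex.exp (Complex.I * k * t)‖^2
        ≤ (∫ ω, (γ 1 ω)^2) + 2 * c * Real.sqrt (∫ ω, (γ 1 ω)^2) :=
  stmt_10_general γ γ' N hL2 hL2' hmean hindep hstat2 hstat2' c hc hsum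
end

section
/- Let f_1, f_2, ... be real square-integrable random variables such that for some constant g ≥ 0 and all 0 ≤ a < b, E(Σ_{n=a+1}^{b} f_n)² ≤ (b - a) g. Then for every N ≥ 1, E[max_{1 ≤ k ≤ N} (Σ_{n=1}^{k} f_n)²] ≤ C (log(2N))² N g for an absolute constant C. -/
/-!
Every partial sum `S(0, k)` with `k < 2 ^ J` telescopes along the binary expansion of `k`:
rounding `k` down to multiples of `2 ^ j` for `j = 0, …, J` writes `S(0, k)` as a sum of `J`
block sums, the one at level `j` being either empty or the block of length `2 ^ j` that starts
at an even multiple of `2 ^ j`. By Cauchy–Schwarz, `max_k S(0, k) ^ 2` is at most `J` times the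
sum of the squares of all such dyadic blocks meeting `[0, N]`, independently of `k`. At each
level these blocks have total expected square `≤ 3 / 2 · N g`, so with `J = ⌊log₂ N⌋ + 1` the
maximal second moment is `≤ 3 / 2 · J ^ 2 · N g = O(log (2N) ^ 2 · N g)`.
-/

open MeasureTheory ProbabilityTheory Finset

def dyadicBlockSum (x : ℕ → ℝ) (j m : ℕ) : ℝ :=
  ∑ n ∈ Ioc (m * 2 ^ (j + 1)) (m * 2 ^ (j + 1) + 2 ^ j), x n

def dyadicSquareSum (x : ℕ → ℝ) (N J : ℕ) : ℝ :=
  ∑ j ∈ range J, ∑ m ∈ range (N / 2 ^ (j + 1) + 1), dyadicBlockSum x j m ^ 2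

lemma Nat.div_two_pow_mul_two_pow_eq (k j : ℕ) :
    k / 2 ^ j * 2 ^ j = k / 2 ^ (j + 1) * 2 ^ (j + 1) + k / 2 ^ j % 2 * 2 ^ j := by
  have hdiv : k / 2 ^ (j + 1) = k / 2 ^ j / 2 := by rw [Nat.div_div_eq_div_mul, pow_succ]
  conv_lhs => rw [← Nat.div_add_mod (k / 2 ^ j) 2]
  rw [hdiv, pow_succ]
  ring

lemma Nat.div_two_pow_succ_add_one_mul_le {N j : ℕ} (hj : 2 ^ j ≤ N) :
    (N / 2 ^ (j + 1) + 1) * 2 ^ (j + 1) ≤ 3 * N := by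
  have := Nat.div_mul_le_self N (2 ^ (j + 1))
  rw [add_one_mul, pow_succ] at *
  omega

lemma sum_Ioc_div_two_pow_mul_eq_sum_range {M : Type*} [AddCommMonoid M] (x : ℕ → M)
    (k J : ℕ) :
    ∑ n ∈ Ioc (k / 2 ^ J * 2 ^ J) k, x n =
      ∑ j ∈ range J, ∑ n ∈ Ioc (k / 2 ^ (j + 1) * 2 ^ (j + 1)) (k / 2 ^ j * 2 ^ j), x n := by
  induction J with
  | zero => simp
  | succ J ih =>
    have hle : k / 2 ^ (J + 1) * 2 ^ (J + 1) ≤ k / 2 ^ J * 2 ^ J := by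
      rw [Nat.div_two_pow_mul_two_pow_eq k J]
      exact Nat.le_add_right _ _
    rw [sum_range_succ, ← ih, ← sum_Ioc_consecutive _ hle (Nat.div_mul_le_self k _), add_comm]

lemma sq_sum_Ioc_div_two_pow_mul_le (x : ℕ → ℝ) {k N : ℕ} (hk : k ≤ N) (j : ℕ) :
    (∑ n ∈ Ioc (k / 2 ^ (j + 1) * 2 ^ (j + 1)) (k / 2 ^ j * 2 ^ j), x n) ^ 2 ≤
      ∑ m ∈ range (N / 2 ^ (j + 1) + 1), dyadicBlockSum x j m ^ 2 := by
  rw [Nat.div_two_pow_mul_two_pow_eq k j]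
  rcases Nat.mod_two_eq_zero_or_one (k / 2 ^ j) with hbit | hbit <;> rw [hbit]
  · simpa using sum_nonneg fun m _ => sq_nonneg (dyadicBlockSum x j m)
  · have hmem : k / 2 ^ (j + 1) ∈ range (N / 2 ^ (j + 1) + 1) :=
      mem_range.2 (Nat.lt_succ_of_le (Nat.div_le_div_right hk))
    simpa [dyadicBlockSum] using
      single_le_sum (f := fun m => dyadicBlockSum x j m ^ 2) (fun m _ => sq_nonneg _) hmem

theorem sup'_sq_sum_Icc_le_mul_dyadicSquareSum (x : ℕ → ℝ) {N J : ℕ} (hN : 1 ≤ N)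
    (hNJ : N < 2 ^ J) :
    (Icc 1 N).sup' (nonempty_Icc.mpr hN) (fun k => (∑ n ∈ Icc 1 k, x n) ^ 2) ≤
      J * dyadicSquareSum x N J := by
  refine sup'_le _ _ fun k hk => ?_
  have hkN : k ≤ N := (mem_Icc.1 hk).2
  have hchain : ∑ n ∈ Icc 1 k, x n =
      ∑ j ∈ range J, ∑ n ∈ Ioc (k / 2 ^ (j + 1) * 2 ^ (j + 1)) (k / 2 ^ j * 2 ^ j), x n := by
    rw [← sum_Ioc_div_two_pow_mul_eq_sum_range, Nat.div_eq_of_lt (hkN.trans_lt hNJ), zero_mul]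
    rfl
  calc (∑ n ∈ Icc 1 k, x n) ^ 2
      ≤ #(range J) * ∑ j ∈ range J,
          (∑ n ∈ Ioc (k / 2 ^ (j + 1) * 2 ^ (j + 1)) (k / 2 ^ j * 2 ^ j), x n) ^ 2 := by
        rw [hchain]
        exact sq_sum_le_card_mul_sum_sq
    _ ≤ J * dyadicSquareSum x N J := by
        rw [card_range]
        exact mul_le_mul_of_nonneg_left
          (sum_le_sum fun j _ => sq_sum_Ioc_div_two_pow_mul_le x hkN j) (Nat.cast_nonneg J)

section Moments

variable {Ω : Type*} [MeasurableSpace Ω] {μ : Measure Ω} {f : ℕ → Ω → ℝ}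

lemma integrable_dyadicBlockSum_sq (hf : ∀ n, MemLp (f n) 2 μ) (j m : ℕ) :
    Integrable (fun ω => dyadicBlockSum (f · ω) j m ^ 2) μ :=
  (memLp_finsetSum _ fun n _ => hf n).integrable_sq

lemma integrable_dyadicSquareSum (hf : ∀ n, MemLp (f n) 2 μ) (N J : ℕ) :
    Integrable (fun ω => dyadicSquareSum (f · ω) N J) μ :=
  integrable_finsetSum _ fun _ _ =>
    integrable_finsetSum _ fun _ _ => integrable_dyadicBlockSum_sq hf _ _

variable {g : ℝ}
  (hblock : ∀ a b : ℕ, a < b → ∫ ω, (∑ n ∈ Ioc a b, f n ω) ^ 2 ∂μ ≤ ((b : ℝ) - a) * g)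
include hblock

lemma integral_dyadicBlockSum_sq_le (j m : ℕ) :
    ∫ ω, dyadicBlockSum (f · ω) j m ^ 2 ∂μ ≤ 2 ^ j * g := by
  have h := hblock (m * 2 ^ (j + 1)) (m * 2 ^ (j + 1) + 2 ^ j)
    (Nat.lt_add_of_pos_right (Nat.two_pow_pos j))
  push_cast at h
  simpa [dyadicBlockSum] using h

lemma integral_dyadicSquareSum_le (hf : ∀ n, MemLp (f n) 2 μ) (hg : 0 ≤ g) {N J : ℕ}
    (hJN : 2 ^ J ≤ 2 * N) :
    ∫ ω, dyadicSquareSum (f · ω) N J ∂μ ≤ J * (3 / 2 * N * g) := by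
  have hlevel : ∀ j ∈ range J,
      ∑ m ∈ range (N / 2 ^ (j + 1) + 1), ∫ ω, dyadicBlockSum (f · ω) j m ^ 2 ∂μ ≤
        3 / 2 * N * g := by
    intro j hj
    have hjN : 2 ^ j ≤ N := by
      have := Nat.pow_le_pow_right two_pos (mem_range.1 hj)
      rw [pow_succ] at this
      omega
    have hcount : ((N / 2 ^ (j + 1) + 1 : ℕ) : ℝ) * 2 ^ j ≤ 3 / 2 * N := by
      have : (((N / 2 ^ (j + 1) + 1) * 2 ^ (j + 1) : ℕ) : ℝ) ≤ ((3 * N : ℕ) : ℝ) := by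
        exact_mod_cast Nat.div_two_pow_succ_add_one_mul_le hjN
      push_cast at this ⊢
      rw [pow_succ (2 : ℝ)] at this
      linarith
    calc ∑ m ∈ range (N / 2 ^ (j + 1) + 1), ∫ ω, dyadicBlockSum (f · ω) j m ^ 2 ∂μ
        ≤ ∑ _m ∈ range (N / 2 ^ (j + 1) + 1), 2 ^ j * g :=
          sum_le_sum fun m _ => integral_dyadicBlockSum_sq_le hblock j m
      _ = ((N / 2 ^ (j + 1) + 1 : ℕ) : ℝ) * 2 ^ j * g := by
          rw [sum_const, card_range, nsmul_eq_mul, mul_assoc]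
      _ ≤ 3 / 2 * N * g := by gcongr
  unfold dyadicSquareSum
  rw [integral_finsetSum _ fun _ _ =>
    integrable_finsetSum _ fun _ _ => integrable_dyadicBlockSum_sq hf _ _]
  simp_rw [integral_finsetSum _ fun _ _ => integrable_dyadicBlockSum_sq hf _ _]
  simpa using sum_le_sum hlevel

end Moments

lemma sq_le_three_mul_sq_log {J N : ℕ} (hJN : 2 ^ J ≤ 2 * N) :
    (J : ℝ) ^ 2 ≤ 3 * Real.log (2 * N) ^ 2 := by
  have hlog : (J : ℝ) * Real.log 2 ≤ Real.log (2 * N) := by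
    rw [← Real.log_pow]
    exact Real.log_le_log (by positivity) (by exact_mod_cast hJN)
  have hsq : ((J : ℝ) * Real.log 2) ^ 2 ≤ Real.log (2 * N) ^ 2 :=
    pow_le_pow_left₀ (by positivity) hlog 2
  have hlog2 : 1 / 3 ≤ Real.log 2 ^ 2 := by nlinarith [Real.log_two_gt_d9]
  nlinarith [sq_nonneg (J : ℝ)]

/-- Menshov-type maximal inequality: if `E(Σ_{n=a+1}^b f_n)² ≤ (b-a)g` for all
`0 ≤ a < b`, then `E[max_{1≤k≤N} (Σ_{n=1}^k f_n)²] ≤ C (log 2N)² N g` for an absolute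
constant `C`. -/
theorem stmt_16 :
    ∃ C : ℝ, 0 < C ∧
      ∀ (Ω : Type) (_ : MeasureSpace Ω) (_ : IsProbabilityMeasure (ℙ : Measure Ω))
        (f : ℕ → Ω → ℝ) (g : ℝ),
        0 ≤ g →
        (∀ n, Measurable (f n)) →
        (∀ n, MemLp (f n) 2 ℙ) →
        (∀ a b : ℕ, a < b →
          ∫ ω, (∑ n ∈ Finset.Icc (a + 1) b, f n ω)^2 ≤ ((b : ℝ) - a) * g) →
        ∀ (N : ℕ) (hN : 1 ≤ N),
          ∫ ω, (Finset.Icc 1 N).sup' (Finset.nonempty_Icc.mpr hN)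
              (fun k => (∑ n ∈ Finset.Icc 1 k, f n ω)^2)
            ≤ C * (Real.log (2 * N))^2 * N * g := by
  refine ⟨9 / 2, by norm_num, fun Ω _ _ f g hg _ hf hblock N hN => ?_⟩
  simp only [Finset.Icc_add_one_left_eq_Ioc] at hblock
  set J := Nat.log 2 N + 1
  have hNJ : N < 2 ^ J := Nat.lt_pow_succ_log_self one_lt_two N
  have hJN : 2 ^ J ≤ 2 * N := by
    rw [pow_succ']
    exact Nat.mul_le_mul_left 2 (Nat.pow_log_le_self 2 (by omega))
  have hsup_nonneg : ∀ ω, 0 ≤ (Finset.Icc 1 N).sup' (Finset.nonempty_Icc.mpr hN)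
      (fun k => (∑ n ∈ Finset.Icc 1 k, f n ω) ^ 2) := fun ω =>
    (sq_nonneg _).trans (le_sup' (fun k => (∑ n ∈ Finset.Icc 1 k, f n ω) ^ 2)
      (right_mem_Icc.2 hN))
  calc _ ≤ ∫ ω, J * dyadicSquareSum (f · ω) N J :=
        integral_mono_of_nonneg (ae_of_all _ hsup_nonneg)
          ((integrable_dyadicSquareSum hf N J).const_mul _)
          (ae_of_all _ fun ω => sup'_sq_sum_Icc_le_mul_dyadicSquareSum (f · ω) hN hNJ)
    _ = J * ∫ ω, dyadicSquareSum (f · ω) N J := integral_const_mul _ _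
    _ ≤ J * (J * (3 / 2 * N * g)) := by
        gcongr
        exact integral_dyadicSquareSum_le hblock hf hg hJN
    _ ≤ 9 / 2 * Real.log (2 * N) ^ 2 * N * g := by
        have hJ := sq_le_three_mul_sq_log hJN
        have hNg : 0 ≤ (N : ℝ) * g := by positivity
        nlinarith
end
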